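/- Let K be a compact subset of { (Q,η) ∈ Sym₀(3)×ℝ : v_min(Q) > −1/3 and |Q|² > η }. Then limsup_{t→0⁺} sup_{(Q,η)∈K} H²({ p ∈ S² : |Qp·p − η| < t }) = 0; that is, for every ε > 0 there is t₀ > 0 such that for all 0 < t < t₀ and all (Q,η) ∈ K, the surface measure of { p ∈ S² : |Qp·p − η| < t } is less than ε. -/

import Mathlib

/-
Common setting for the formalisation of
"An analysis of equilibria in dense nematic liquid crystals" (J. M. Taylor).

* `V3` is ℝ³ (as a Euclidean space), `sph` is the unit sphere S²,
  and `μS` is the 2-dimensional Hausdorff (surface) measure restricted to S².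
* `IsProb f` says `f ∈ P(S²)`.
* `FE f η` is the free energy `F(f,η) ∈ ℝ ∪ {+∞}` (realised as `EReal`),
  with the conventions `0 ln 0 = 0`, `0 ⬝ (+∞) = 0` and `-ln x = +∞` for `x ≤ 0`:
  the value is the real integral whenever the argument of the logarithm is a.e.
  positive on `{f ≠ 0}` and the integrand is integrable, and `+∞` otherwise.
-/

open MeasureTheory Matrix Filter
open scoped ENNReal Topology Classical

noncomputable section

abbrev V3 : Type := EuclideanSpace ℝ (Fin 3)

/-- The unit sphere S² in ℝ³. -/
def sph : Set V3 := Metric.sphere (0 : V3) 1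

/-- The 2-dimensional Hausdorff (surface) measure on S². -/
def μS : Measure V3 := (μH[2]).restrict sph

abbrev Mat3 : Type := Matrix (Fin 3) (Fin 3) ℝ

/-- Membership in Sym₀(3): real symmetric traceless 3×3 matrices. -/
def Sym0 (Q : Mat3) : Prop := Q.IsSymm ∧ Q.trace = 0

/-- The Frobenius inner product `A·B = trace (A*B)` (on symmetric matrices). -/
def mdot (A B : Mat3) : ℝ := (A * B).trace

/-- The quadratic form `p ↦ Qp·p`. -/
def qf (Q : Mat3) (p : V3) : ℝ := ∑ i, ∑ j, Q i j * p i * p j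

/-- The smallest eigenvalue of a symmetric matrix, via Rayleigh quotients on S². -/
def vmin (Q : Mat3) : ℝ := ⨅ p : sph, qf Q (p : V3)

/-- `f ∈ P(S²)`. -/
def IsProb (f : V3 → ℝ) : Prop :=
  Integrable f μS ∧ (∀ᵐ p ∂μS, 0 ≤ f p) ∧ ∫ p, f p ∂μS = 1

/-- The interaction term `p ↦ ∫_{S²} ((p·q)² − 1/3) f(q) dq`. -/
def Kf (f : V3 → ℝ) (p : V3) : ℝ :=
  ∫ q, ((∑ i, p i * q i) ^ 2 - 1 / 3) * f q ∂μS

/-- The free energy `F(f,η) ∈ ℝ ∪ {+∞}`. -/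
def FE (f : V3 → ℝ) (η : ℝ) : EReal :=
  if (∀ᵐ p ∂μS, f p ≠ 0 → η < Kf f p) ∧
      Integrable (fun p => f p * Real.log (f p) - f p * Real.log (Kf f p - η)) μS
  then ((∫ p, f p * Real.log (f p) - f p * Real.log (Kf f p - η) ∂μS : ℝ) : EReal)
  else ⊤

/-- The Q-tensor `Q(f) = ∫_{S²} (p⊗p − (1/3)I) f(p) dp`. -/
def Qten (f : V3 → ℝ) : Mat3 :=
  Matrix.of fun i j => ∫ p, f p * (p i * p j - if i = j then (1 : ℝ) / 3 else 0) ∂μS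

/-- The macroscopic energy `J(Q,η) = inf_{f ∈ A(Q)} F(f,η)` (`= +∞` when `A(Q) = ∅`). -/
def Jfun (Q : Mat3) (η : ℝ) : EReal :=
  sInf {y : EReal | ∃ f : V3 → ℝ, IsProb f ∧ Qten f = Q ∧ FE f η = y}

/-- The dual objective `D(Q,λ,η) = λ·Q − ln ∫_{S²} exp(λp·p) max(Qp·p − η, 0) dp`. -/
def Dob (Q lam : Mat3) (η : ℝ) : ℝ :=
  mdot lam Q - Real.log (∫ p, Real.exp (qf lam p) * max (qf Q p - η) 0 ∂μS)

/-- The effective domain of `J(·,η)`. -/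
def domJ (η : ℝ) : Set Mat3 :=
  {Q : Mat3 | Sym0 Q ∧ -(1/3) < vmin Q ∧ η < mdot Q Q}

/-- The matrix `∫_{S²} (f(p)/(Qp·p − η)) (p⊗p − (1/3)I) dp` (integrand `0` where `f` vanishes,
by the junk-value conventions of division in Lean). -/
def Mmat (f : V3 → ℝ) (Q : Mat3) (η : ℝ) : Mat3 :=
  Matrix.of fun i j =>
    ∫ p, f p / (qf Q p - η) * (p i * p j - if i = j then (1 : ℝ) / 3 else 0) ∂μS

/-- The entropy `∫_{S²} f ln f ∈ ℝ ∪ {+∞}`. -/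
def EntE (f : V3 → ℝ) : EReal :=
  if Integrable (fun p => f p * Real.log (f p)) μS
  then ((∫ p, f p * Real.log (f p) ∂μS : ℝ) : EReal)
  else ⊤

/-- The Ball–Majumdar singular potential `ψ_s(Q) = inf_{f ∈ A(Q)} ∫ f ln f`. -/
def psiS (Q : Mat3) : EReal :=
  sInf {y : EReal | ∃ f : V3 → ℝ, IsProb f ∧ Qten f = Q ∧ EntE f = y}

/-- `f` is an `L^p`-local minimiser of `F(·,η)`. -/
def LpLocMin (pp : ℝ≥0∞) (η : ℝ) (f : V3 → ℝ) : Prop :=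
  FE f η < ⊤ ∧ ∃ ε : ℝ, 0 < ε ∧ ∀ g : V3 → ℝ, IsProb g →
    eLpNorm (g - f) pp μS < ENNReal.ofReal ε → FE f η ≤ FE g η

/-!
For `(Q, η)` in the domain, `p ↦ Qp·p` is not constantly `η` on S²: otherwise `Q = ηI`, and
tracelessness forces `Q = 0`, contradicting `|Q|² > η`. In spherical coordinates the level set
`{Qp·p = η}` is the zero set of a real-analytic function on ℝ² that does not vanish identically,
hence Lebesgue-null (isolated zeros on each line, then Fubini); the coordinate map is Lipschitz, so
the level set is H²-null. By continuity of the finite measure H²|S² from above,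
`H²{|Qp·p − η| < t}` is small for small `t`. Since `Qp·p − η` depends continuously on `(Q, η)`,
uniformly in `p ∈ S²`, one `t` serves a whole neighbourhood of `(Q, η)`, and compactness of `K`
gives a uniform `t₀`.
-/

open Set Real

theorem AnalyticOnNhd.measure_setOf_eq_zero {μ : Measure ℝ} [NullSingletonClass μ] {f : ℝ → ℝ}
    (hf : AnalyticOnNhd ℝ f univ) (h : ∃ x, f x ≠ 0) : μ {x | f x = 0} = 0 := by
  obtain ⟨x, hx⟩ := h
  rcases hf.eqOn_zero_or_eventually_ne_zero_of_preconnected isPreconnected_univ with h0 | hne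
  · exact absurd (h0 (mem_univ x)) hx
  · have hae : ∀ᵐ x ∂μ, f x ≠ 0 :=
      Measure.restrict_univ (μ := μ) ▸ ae_restrict_le_codiscreteWithin MeasurableSet.univ hne
    simpa [ae_iff] using hae

theorem AnalyticOnNhd.measure_prod_setOf_eq_zero {μ ν : Measure ℝ} [NullSingletonClass μ]
    [NullSingletonClass ν] [SFinite ν] {F : ℝ × ℝ → ℝ} (hF : AnalyticOnNhd ℝ F univ)
    (h : ∃ z, F z ≠ 0) : μ.prod ν {z | F z = 0} = 0 := by
  obtain ⟨⟨x₀, y₀⟩, hz⟩ := h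
  have hslice₁ : ∀ y, AnalyticOnNhd ℝ (fun x => F (x, y)) univ := fun y x _ => by
    have := hF (x, y) trivial; fun_prop
  have hslice₂ : ∀ x, AnalyticOnNhd ℝ (fun y => F (x, y)) univ := fun x y _ => by
    have := hF (x, y) trivial; fun_prop
  have hs : MeasurableSet {z | F z = 0} :=
    (continuousOn_univ.mp hF.continuousOn).measurable (measurableSet_singleton 0)
  rw [Measure.measure_prod_null hs]
  have hgood : ∀ᵐ x ∂μ, F (x, y₀) ≠ 0 :=
    measure_mono_null (fun x hx => by simpa using hx)
      ((hslice₁ y₀).measure_setOf_eq_zero ⟨x₀, hz⟩)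
  filter_upwards [hgood] with x hx
  exact (hslice₂ x).measure_setOf_eq_zero ⟨y₀, hx⟩

def sphPoint (ψ θ : ℝ) : V3 :=
  WithLp.toLp 2 ![sin θ * cos ψ, sin θ * sin ψ, cos θ]

def sphCoords (x : Fin 2 → ℝ) : V3 := sphPoint (x 0) (x 1)

lemma sum_sq_eq_one_of_mem_sph {p : V3} (hp : p ∈ sph) : p 0 ^ 2 + p 1 ^ 2 + p 2 ^ 2 = 1 := by
  have h := EuclideanSpace.norm_sq_eq p
  rw [show ‖p‖ = 1 from mem_sphere_zero_iff_norm.mp hp] at h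
  simpa [Fin.sum_univ_three, eq_comm] using h

lemma sph_subset_image_sphCoords : sph ⊆ sphCoords '' Metric.closedBall 0 4 := by
  intro p hp
  have hs := sum_sq_eq_one_of_mem_sph hp
  have hp2 : |p 2| ≤ 1 := abs_le_one_iff_mul_self_le_one.mpr (by nlinarith)
  set z : ℂ := ⟨p 0, p 1⟩
  have hsin : sin (arccos (p 2)) = ‖z‖ := by
    rw [sin_arccos, Complex.norm_def, Complex.normSq_mk]
    congr 1
    linarith
  refine ⟨![z.arg, arccos (p 2)], ?_, ?_⟩
  · have h₀ : |z.arg| ≤ 4 := abs_le.mpr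
      ⟨by linarith [Complex.neg_pi_lt_arg z, pi_le_four],
        by linarith [Complex.arg_le_pi z, pi_le_four]⟩
    have h₁ : |arccos (p 2)| ≤ 4 := abs_le.mpr
      ⟨by linarith [arccos_nonneg (p 2)], by linarith [arccos_le_pi (p 2), pi_le_four]⟩
    rw [mem_closedBall_zero_iff, pi_norm_le_iff_of_nonneg (by norm_num)]
    intro i
    fin_cases i
    exacts [h₀, h₁]
  · obtain ⟨hp2l, hp2r⟩ := abs_le.mp hp2
    ext i
    fin_cases i <;> simp [sphCoords, sphPoint, hsin, Complex.norm_mul_cos_arg,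
      Complex.norm_mul_sin_arg, cos_arccos hp2l hp2r, z]

lemma abs_mul_sub_mul_le (a b a' b' : ℝ) (hb : |b| ≤ 1) (ha' : |a'| ≤ 1) :
    |a * b - a' * b'| ≤ |a - a'| + |b - b'| :=
  calc |a * b - a' * b'| = |(a - a') * b + a' * (b - b')| := by ring_nf
    _ ≤ |a - a'| * |b| + |a'| * |b - b'| := by rw [← abs_mul, ← abs_mul]; exact abs_add_le _ _
    _ ≤ |a - a'| + |b - b'| :=
      add_le_add (mul_le_of_le_one_right (abs_nonneg _) hb)
        (mul_le_of_le_one_left (abs_nonneg _) ha')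

lemma lipschitzWith_sphCoords : LipschitzWith 4 sphCoords := by
  refine LipschitzWith.of_dist_le_mul fun x y => ?_
  set d := dist x y
  have hx : ∀ i, |x i - y i| ≤ d := fun i => by simpa [Real.dist_eq] using dist_le_pi_dist x y i
  have hcoord : ∀ i, dist (sphCoords x i) (sphCoords y i) ≤ 2 * d := by
    intro i
    rw [Real.dist_eq]
    fin_cases i
    · show |sin (x 1) * cos (x 0) - sin (y 1) * cos (y 0)| ≤ 2 * d
      linarith [abs_mul_sub_mul_le (sin (x 1)) (cos (x 0)) (sin (y 1)) (cos (y 0))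
          (abs_cos_le_one _) (abs_sin_le_one _),
        abs_sin_sub_sin_le (x 1) (y 1), abs_cos_sub_cos_le (x 0) (y 0), hx 0, hx 1]
    · show |sin (x 1) * sin (x 0) - sin (y 1) * sin (y 0)| ≤ 2 * d
      linarith [abs_mul_sub_mul_le (sin (x 1)) (sin (x 0)) (sin (y 1)) (sin (y 0))
          (abs_sin_le_one _) (abs_sin_le_one _),
        abs_sin_sub_sin_le (x 1) (y 1), abs_sin_sub_sin_le (x 0) (y 0), hx 0, hx 1]
    · show |cos (x 1) - cos (y 1)| ≤ 2 * d
      linarith [abs_cos_sub_cos_le (x 1) (y 1), hx 1, abs_nonneg (x 1 - y 1)]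
  have hsq : ∀ i, dist (sphCoords x i) (sphCoords y i) ^ 2 ≤ (2 * d) ^ 2 :=
    fun i => pow_le_pow_left₀ dist_nonneg (hcoord i) 2
  calc dist (sphCoords x) (sphCoords y)
      = √(∑ i, dist (sphCoords x i) (sphCoords y i) ^ 2) := EuclideanSpace.dist_eq _ _
    _ ≤ √((4 * d) ^ 2) :=
      Real.sqrt_le_sqrt (by rw [Fin.sum_univ_three]; nlinarith [hsq 0, hsq 1, hsq 2])
    _ = 4 * d := Real.sqrt_sq (by positivity)

lemma hausdorffMeasure_eq_volume_fin_two : (μH[2] : Measure (Fin 2 → ℝ)) = volume := by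
  simpa using hausdorffMeasure_pi_real (ι := Fin 2)

lemma hausdorffMeasure_sph_ne_top : μH[2] sph ≠ ∞ := by
  have h := lipschitzWith_sphCoords.hausdorffMeasure_image_le (by norm_num : (0 : ℝ) ≤ 2)
    (Metric.closedBall 0 4)
  rw [hausdorffMeasure_eq_volume_fin_two] at h
  refine ne_top_of_le_ne_top ?_ ((measure_mono sph_subset_image_sphCoords).trans h)
  exact ENNReal.mul_ne_top (by simp) measure_closedBall_lt_top.ne

instance : IsFiniteMeasure μS := isFiniteMeasure_restrict.mpr hausdorffMeasure_sph_ne_top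

lemma continuous_qf (M : Mat3) : Continuous (qf M) := by
  unfold qf; fun_prop

open scoped ContDiff in
lemma contDiff_qf_sphPoint (M : Mat3) :
    ContDiff ℝ ω fun w : ℝ × ℝ => qf M (sphPoint w.1 w.2) := by
  simp only [qf, sphPoint, Fin.sum_univ_three, PiLp.toLp_apply, Matrix.cons_val_zero,
    Matrix.cons_val_one, Matrix.cons_val_two, Matrix.head_cons, Matrix.tail_cons]
  fun_prop

lemma hausdorffMeasure_sph_inter_qf_eq_eq_zero (M : Mat3) (c : ℝ) (h : ∃ p ∈ sph, qf M p ≠ c) :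
    μH[2] (sph ∩ {p | qf M p = c}) = 0 := by
  set F : ℝ × ℝ → ℝ := fun w => qf M (sphPoint w.1 w.2) - c
  have hF : volume {w | F w = 0} = 0 := by
    rw [Measure.volume_eq_prod]
    refine AnalyticOnNhd.measure_prod_setOf_eq_zero (fun w _ => ?_) ?_
    · exact ((contDiff_qf_sphPoint M).sub contDiff_const).contDiffAt.analyticAt
    obtain ⟨p, hp, hpc⟩ := h
    obtain ⟨x, -, rfl⟩ := sph_subset_image_sphCoords hp
    exact ⟨(x 0, x 1), sub_ne_zero.mpr hpc⟩
  have hsub : sph ∩ {p | qf M p = c} ⊆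
      sphCoords '' (MeasurableEquiv.piFinTwo fun _ => ℝ) ⁻¹' {w | F w = 0} := by
    rintro p ⟨hp, hpc⟩
    obtain ⟨x, -, rfl⟩ := sph_subset_image_sphCoords hp
    exact ⟨x, sub_eq_zero.mpr hpc, rfl⟩
  have h := lipschitzWith_sphCoords.hausdorffMeasure_image_le (by norm_num : (0 : ℝ) ≤ 2)
    ((MeasurableEquiv.piFinTwo fun _ => ℝ) ⁻¹' {w | F w = 0})
  rw [hausdorffMeasure_eq_volume_fin_two,
    (volume_preserving_piFinTwo fun _ => ℝ).measure_preimage_equiv, hF, mul_zero] at h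
  exact measure_mono_null hsub (nonpos_iff_eq_zero.mp h)

lemma qf_sub (A B : Mat3) (p : V3) : qf (A - B) p = qf A p - qf B p := by
  simp only [qf, Matrix.sub_apply, sub_mul, Finset.sum_sub_distrib]

lemma qf_smul_one (c : ℝ) (p : V3) : qf (c • 1) p = c * ‖p‖ ^ 2 := by
  simp only [qf, Matrix.smul_apply, Matrix.one_apply, smul_eq_mul, mul_ite, mul_one, mul_zero,
    ite_mul, zero_mul, Finset.sum_ite_eq, Finset.mem_univ, ↓reduceIte, Fin.sum_univ_three,
    EuclideanSpace.norm_sq_eq, Real.norm_eq_abs, sq_abs]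
  ring

lemma qf_smul (M : Mat3) (r : ℝ) (p : V3) : qf M (r • p) = r ^ 2 * qf M p := by
  simp only [qf, Fin.sum_univ_three, PiLp.smul_apply, smul_eq_mul]
  ring

lemma qf_eq_zero_of_eqOn_sph {M : Mat3} (h : ∀ p ∈ sph, qf M p = 0) (v : V3) : qf M v = 0 := by
  rcases eq_or_ne v 0 with rfl | hv
  · simp [qf]
  have hv' : ‖v‖ ≠ 0 := norm_ne_zero_iff.mpr hv
  have hmem : ‖v‖⁻¹ • v ∈ sph := by simp [sph, norm_smul, hv']
  rw [← smul_inv_smul₀ hv' v, qf_smul, h _ hmem, mul_zero]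

lemma eq_zero_of_qf_eq_zero {M : Mat3} (hM : M.IsSymm) (h : ∀ v, qf M v = 0) : M = 0 := by
  ext i j
  have key : qf M (EuclideanSpace.single i 1 + EuclideanSpace.single j 1)
      - qf M (EuclideanSpace.single i 1) - qf M (EuclideanSpace.single j 1) = M i j + M j i := by
    simp only [qf, PiLp.add_apply, PiLp.single_apply, mul_add, mul_ite, mul_one, mul_zero,
      Finset.sum_add_distrib, Finset.sum_ite_eq', Finset.mem_univ, ↓reduceIte]
    ring
  rw [h, h, h, hM.apply i j] at key
  rw [Matrix.zero_apply]
  linarith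

lemma eq_smul_one_of_qf_eqOn_sph {M : Mat3} (hM : M.IsSymm) {c : ℝ}
    (h : ∀ p ∈ sph, qf M p = c) : M = c • 1 := by
  refine sub_eq_zero.mp (eq_zero_of_qf_eq_zero (hM.sub (isSymm_one.smul c))
    (qf_eq_zero_of_eqOn_sph fun p hp => ?_))
  rw [qf_sub, qf_smul_one, h p hp, show ‖p‖ = 1 from mem_sphere_zero_iff_norm.mp hp]
  ring

lemma exists_qf_ne_of_sym0 {Q : Mat3} (hQ : Sym0 Q) {η : ℝ} (hη : η < mdot Q Q) :
    ∃ p ∈ sph, qf Q p ≠ η := by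
  by_contra! h
  have hQη := eq_smul_one_of_qf_eqOn_sph hQ.1 h
  have hη0 : η = 0 := by simpa [hQη] using hQ.2
  rw [hQη, hη0, zero_smul] at hη
  simp [mdot] at hη

lemma tendsto_measure_abs_lt_nhdsGT_zero {α : Type*} [MeasurableSpace α] (μ : Measure α)
    [IsFiniteMeasure μ] {f : α → ℝ} (hf : Measurable f) :
    Tendsto (fun t => μ {x | |f x| < t}) (𝓝[>] 0) (𝓝 (μ {x | f x = 0})) := by
  have hInter : ⋂ r > (0 : ℝ), {x | |f x| < r} = {x | f x = 0} := by
    ext x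
    simp only [mem_iInter, mem_ofPred_eq]
    refine ⟨fun h => abs_eq_zero.mp ?_, fun h r hr => by rwa [h, abs_zero]⟩
    exact le_antisymm (le_of_forall_gt fun r hr => h r hr) (abs_nonneg _)
  rw [← hInter]
  exact tendsto_measure_biInter_gt
    (fun r _ => (measurableSet_lt hf.abs measurable_const).nullMeasurableSet)
    (fun _ _ _ hij _ hx => lt_of_lt_of_le hx hij) ⟨1, one_pos, measure_ne_top _ _⟩

lemma tendsto_μS_abs_qf_sub_lt {Q : Mat3} {η : ℝ} (h : ∃ p ∈ sph, qf Q p ≠ η) :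
    Tendsto (fun t => μS {p | |qf Q p - η| < t}) (𝓝[>] 0) (𝓝 0) := by
  have hm : Measurable fun p => qf Q p - η := ((continuous_qf Q).sub continuous_const).measurable
  have hzero : μS {p | qf Q p - η = 0} = 0 := by
    have hms : MeasurableSet {p | qf Q p - η = 0} := hm (measurableSet_singleton 0)
    rw [μS, Measure.restrict_apply hms, inter_comm]
    simpa [sub_eq_zero] using hausdorffMeasure_sph_inter_qf_eq_eq_zero Q η h
  simpa [hzero] using tendsto_measure_abs_lt_nhdsGT_zero μS hm

lemma eventually_μS_abs_qf_sub_lt {z : Mat3 × ℝ} (hz : ∃ p ∈ sph, qf z.1 p ≠ z.2) {δ : ℝ≥0∞}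
    (hδ : 0 < δ) :
    ∀ᶠ tw : ℝ × (Mat3 × ℝ) in 𝓝 (0, z), 0 < tw.1 →
      μS {p | |qf tw.2.1 p - tw.2.2| < tw.1} < δ := by
  obtain ⟨r, hrδ, hr⟩ := (((tendsto_μS_abs_qf_sub_lt hz).eventually_lt_const hδ).and
    self_mem_nhdsWithin).exists
  have hs : 0 < r / 2 := half_pos hr
  have hunif : ∀ᶠ w in 𝓝 z, ∀ p ∈ sph, |(qf w.1 p - w.2) - (qf z.1 p - z.2)| < r / 2 := by
    refine (isCompact_sphere (0 : V3) 1).eventually_forall_of_forall_eventually fun p _ => ?_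
    have hc : Continuous fun wp : (Mat3 × ℝ) × V3 =>
        |(qf wp.1.1 wp.2 - wp.1.2) - (qf z.1 wp.2 - z.2)| := by
      unfold qf; fun_prop
    exact hc.continuousAt.eventually_lt continuousAt_const (by simpa using hs)
  filter_upwards [prod_mem_nhds (Iio_mem_nhds hs) hunif]
  rintro ⟨t, w⟩
    ⟨ht : t < r / 2, hw : ∀ p ∈ sph, |(qf w.1 p - w.2) - (qf z.1 p - z.2)| < r / 2⟩ -
  refine lt_of_le_of_lt (measure_mono_ae ?_) hrδ
  filter_upwards [ae_restrict_mem (Metric.isClosed_sphere.measurableSet : MeasurableSet sph)]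
    with p hp (hpt : |qf w.1 p - w.2| < t)
  show |qf z.1 p - z.2| < r
  linarith [abs_sub_abs_le_abs_sub (qf z.1 p - z.2) (qf w.1 p - w.2), abs_sub_comm
    (qf w.1 p - w.2) (qf z.1 p - z.2), hw p hp]

/-- for compact `K ⊆ {(Q,η) : Q ∈ Sym₀(3), v_min(Q) > −1/3, |Q|² > η}`,
`limsup_{t→0⁺} sup_{(Q,η)∈K} H²({p ∈ S² : |Qp·p − η| < t}) = 0`. -/
theorem stmt_11 (K : Set (Mat3 × ℝ)) (hK : IsCompact K)
    (hsub : K ⊆ {Qη : Mat3 × ℝ |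
      Sym0 Qη.1 ∧ -(1/3) < vmin Qη.1 ∧ Qη.2 < mdot Qη.1 Qη.1}) :
    ∀ ε : ℝ, 0 < ε → ∃ t₀ : ℝ, 0 < t₀ ∧ ∀ t : ℝ, 0 < t → t < t₀ →
      ∀ Q : Mat3, ∀ η : ℝ, (Q, η) ∈ K →
        μS {p : V3 | |qf Q p - η| < t} < ENNReal.ofReal ε := by
  intro ε hε
  have hsmall : ∀ᶠ t in 𝓝 (0 : ℝ), ∀ z ∈ K, 0 < t →
      μS {p | |qf z.1 p - z.2| < t} < ENNReal.ofReal ε :=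
    hK.eventually_forall_of_forall_eventually fun z hz =>
      eventually_μS_abs_qf_sub_lt (exists_qf_ne_of_sym0 (hsub hz).1 (hsub hz).2.2)
        (ENNReal.ofReal_pos.mpr hε)
  obtain ⟨t₀, ht₀, h⟩ := Metric.eventually_nhds_iff.mp hsmall
  exact ⟨t₀, ht₀, fun t ht htt Q η hQη =>
    h (by rwa [Real.dist_0_eq_abs, abs_of_pos ht]) (Q, η) hQη ht⟩
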